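/- arXiv:0906.0790 — 7 statements merged into one kernel-verified Lean document; each statement's English description precedes it below -/
import Mathlib

section
/- A polynomial P(X) of degree ≤ 5 satisfies P(X)² ≡ (quadratic) (mod F(X)) if and only if, writing π_j = P(θ_j)/ω_j, the three equations Σ_j θ_j^i ω_j π_j² = 0 hold for i = 0, 1, 2. Equivalently, writing C(X) ≡ P(X)² mod F(X) with deg C ≤ 5, the coefficients of X⁵, X⁴, X³ in C vanish iff Σ_j θ_j^i ω_j π_j² = 0 for i = 0,1,2 (assuming f₆ = 1). -/
/-!
Let `G = P² mod F`, of degree `< 6`; since `F(θ_j) = 0`, `θ_j^i ω_j π_j² = θ_j^i G(θ_j) / ω_j`.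
By Lagrange interpolation, `Σ_j H(θ_j) / ω_j` is the `X⁵`-coefficient of any `H` of degree `< 6`.
Applied to `H = X^l G`, this reads the sums for `l = 0, 1, 2` off the coefficients of `G` in a
triangular way, so they all vanish exactly when `deg G < 3`, i.e. when `P²` is congruent to a
quadratic.
-/

open Polynomial Finset Lagrange

section

variable {K ι : Type*} [Field K] [DecidableEq ι] {s : Finset ι} {v : ι → K}

theorem sum_pow_mul_eval_div_eq_coeff (hvs : Set.InjOn v s) {G : K[X]} {l : ℕ}
    (hl : G.natDegree + l < #s) :
    ∑ i ∈ s, v i ^ l * G.eval (v i) / ∏ j ∈ s.erase i, (v i - v j) = G.coeff (#s - 1 - l) := by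
  have hdeg : (X ^ l * G).degree < ↑(#s) := by
    refine degree_lt_iff_coeff_zero _ _ |>.2 fun k hk => ?_
    rw [coeff_X_pow_mul', if_pos (by omega)]
    exact coeff_eq_zero_of_natDegree_lt (by omega)
  rw [← coeff_X_pow_mul' .. |>.trans (if_pos (by omega)), coeff_eq_sum hvs hdeg]
  simp only [eval_mul, eval_pow, eval_X]

theorem sum_pow_mul_eval_div_eq_zero_iff_degree_lt (hvs : Set.InjOn v s) {G : K[X]}
    (hG : G.degree < ↑(#s)) (m : ℕ) :
    (∀ l < m, ∑ i ∈ s, v i ^ l * G.eval (v i) / ∏ j ∈ s.erase i, (v i - v j) = 0) ↔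
      G.degree < ↑(#s - m) := by
  rcases eq_or_ne G 0 with rfl | hG0
  · simp
  simp only [← natDegree_lt_iff_degree_lt hG0] at hG ⊢
  constructor
  · intro h
    by_contra! hd
    refine leadingCoeff_ne_zero.2 hG0 ?_
    rw [leadingCoeff, ← h (#s - 1 - G.natDegree) (by omega),
      sum_pow_mul_eval_div_eq_coeff hvs (by omega)]
    congr
    omega
  · intro hd l hl
    rw [sum_pow_mul_eval_div_eq_coeff hvs (by omega)]
    exact coeff_eq_zero_of_natDegree_lt (by omega)

theorem exists_degree_le_dvd_sub_iff {F : K[X]} (hF : F.Monic) {d : WithBot ℕ}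
    (hd : d < F.degree) (A : K[X]) :
    (∃ Q : K[X], Q.degree ≤ d ∧ F ∣ A - Q) ↔ (A %ₘ F).degree ≤ d := by
  constructor
  · rintro ⟨Q, hQd, hdvd⟩
    rwa [modByMonic_eq_of_dvd_sub hF hdvd, (modByMonic_eq_self_iff hF).2 (hQd.trans_lt hd)]
  · exact fun h => ⟨A %ₘ F, h, by simpa using (dvd_modByMonic_sub A F).neg_right⟩

theorem coeff_five_four_three_eq_zero_iff {G : K[X]} (hG : G.degree < 6) :
    (G.coeff 5 = 0 ∧ G.coeff 4 = 0 ∧ G.coeff 3 = 0) ↔ G.degree < 3 := by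
  rw [show (3 : WithBot ℕ) = (3 : ℕ) from rfl, degree_lt_iff_coeff_zero]
  constructor
  · rintro ⟨h5, h4, h3⟩ k hk
    obtain rfl | rfl | rfl | hk6 : k = 3 ∨ k = 4 ∨ k = 5 ∨ 6 ≤ k := by omega
    · exact h3
    · exact h4
    · exact h5
    · exact coeff_eq_zero_of_degree_lt (hG.trans_le (by exact_mod_cast hk6))
  · intro h
    exact ⟨h 5 (by norm_num), h 4 (by norm_num), h 3 le_rfl⟩

end

theorem stmt6_general {K : Type*} [Field K]
    (θ : Fin 6 → K) (hθ : Function.Injective θ)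
    (F : K[X]) (hF : F = ∏ i, (X - C (θ i)))
    (ω : Fin 6 → K) (hω : ∀ j, ω j = ∏ i ∈ Finset.univ.filter (· ≠ j), (θ j - θ i))
    (P : K[X])
    (π : Fin 6 → K) (hπ : ∀ j, π j = P.eval (θ j) / ω j) :
    ((∃ Q : K[X], Q.degree ≤ 2 ∧ F ∣ P ^ 2 - Q) ↔
        ∀ i : Fin 3, ∑ j, θ j ^ (i : ℕ) * ω j * π j ^ 2 = 0) ∧
      (((P ^ 2 %ₘ F).coeff 5 = 0 ∧ (P ^ 2 %ₘ F).coeff 4 = 0 ∧ (P ^ 2 %ₘ F).coeff 3 = 0) ↔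
        ∀ i : Fin 3, ∑ j, θ j ^ (i : ℕ) * ω j * π j ^ 2 = 0) := by
  have hFnodal : F = nodal univ θ := hF
  have hFdeg : F.degree = 6 := by simp [hFnodal, degree_nodal]
  have hFmonic : F.Monic := hFnodal ▸ nodal_monic
  set G := P ^ 2 %ₘ F
  have hGdeg : G.degree < 6 := hFdeg ▸ degree_modByMonic_lt _ hFmonic
  have hterm (l : ℕ) (j : Fin 6) :
      θ j ^ l * ω j * π j ^ 2 = θ j ^ l * G.eval (θ j) / ∏ k ∈ univ.erase j, (θ j - θ k) := by
    have hωj : ∏ k ∈ univ.erase j, (θ j - θ k) ≠ 0 :=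
      prod_ne_zero_iff.2 fun k hk => sub_ne_zero.2 (hθ.ne (ne_of_mem_erase hk).symm)
    have hGθ : G.eval (θ j) = P.eval (θ j) ^ 2 := by
      rw [← eval_pow]
      exact eval₂_modByMonic_eq_self_of_root (by simp [hFnodal, eval_nodal_at_node])
    rw [hπ, hω, filter_ne', hGθ]
    field_simp
  have hsums : (∀ i : Fin 3, ∑ j, θ j ^ (i : ℕ) * ω j * π j ^ 2 = 0) ↔ G.degree < 3 := by
    simp_rw [Fin.forall_iff, hterm]
    have := sum_pow_mul_eval_div_eq_zero_iff_degree_lt (s := univ) hθ.injOn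
      (by simpa using hGdeg) 3
    rwa [card_univ, Fintype.card_fin] at this
  refine ⟨?_, (coeff_five_four_three_eq_zero_iff hGdeg).trans hsums.symm⟩
  rw [exists_degree_le_dvd_sub_iff hFmonic (by rw [hFdeg]; norm_num), hsums]
  exact Order.lt_succ_iff.symm

/-- for monic `F` (`f₆ = 1`) and `deg P ≤ 5`, `P²` is congruent to a quadratic
mod `F` iff `Σ_j θ_j^i ω_j π_j² = 0` for `i = 0,1,2`; equivalently, the coefficients of
`X⁵, X⁴, X³` in `C = P² mod F` vanish iff these three equations hold. -/
theorem stmt6 {K : Type*} [Field K] (hchar : (2 : K) ≠ 0)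
    (θ : Fin 6 → K) (hθ : Function.Injective θ)
    (F : K[X]) (hF : F = ∏ i, (X - C (θ i)))
    (ω : Fin 6 → K) (hω : ∀ j, ω j = ∏ i ∈ Finset.univ.filter (· ≠ j), (θ j - θ i))
    (P : K[X]) (hP : P.degree ≤ 5)
    (π : Fin 6 → K) (hπ : ∀ j, π j = P.eval (θ j) / ω j) :
    ((∃ Q : K[X], Q.degree ≤ 2 ∧ F ∣ P ^ 2 - Q) ↔
        ∀ i : Fin 3, ∑ j, θ j ^ (i : ℕ) * ω j * π j ^ 2 = 0) ∧
      (((P ^ 2 %ₘ F).coeff 5 = 0 ∧ (P ^ 2 %ₘ F).coeff 4 = 0 ∧ (P ^ 2 %ₘ F).coeff 3 = 0) ↔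
        ∀ i : Fin 3, ∑ j, θ j ^ (i : ℕ) * ω j * π j ^ 2 = 0) :=
  stmt6_general θ hθ F hF ω hω P π hπ
end

section
/- For i ≠ j, the lines Δ₀ and Δ_{ij} = ε^{(i)}∘ε^{(j)}(Δ₀) are disjoint: there is no nonzero polynomial P of degree ≤ 1 and α ∈ k̄* with α·P(X) ≡ g_i(X)g_j(X)P(X) (mod F(X)). -/
open Polynomial

/-- for `i ≠ j`, the lines `Δ₀` and `Δ_{ij}` are disjoint: no nonzero
polynomial `P` of degree ≤ 1 satisfies `α P ≡ g_i g_j P (mod F)` for a nonzero scalar `α`. -/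
theorem stmt9 {K : Type*} [Field K] [IsAlgClosed K] (hchar : (2 : K) ≠ 0)
    (θ : Fin 6 → K) (hθ : Function.Injective θ)
    (f6 : K) (hf6 : f6 ≠ 0) (F : K[X]) (hF : F = C f6 * ∏ m, (X - C (θ m)))
    (Pj : Fin 6 → K[X])
    (hPj : ∀ j, Pj j = ∏ m ∈ Finset.univ.filter (· ≠ j), (X - C (θ m)))
    (g : Fin 6 → K[X])
    (hg : ∀ m, g m = 1 - C (2 / (Pj m).eval (θ m)) * Pj m)
    (i j : Fin 6) (hij : i ≠ j) :
    ¬ ∃ (P : K[X]) (α : K), P ≠ 0 ∧ P.degree ≤ 1 ∧ α ≠ 0 ∧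
        F ∣ C α * P - g i * g j * P := by
  classical
  rintro ⟨P, α, hP0, hPdeg, hα0, hdvd⟩
  have hPjθ : ∀ m, (Pj m).eval (θ m) ≠ 0 := by
    intro m
    rw [hPj, eval_prod]
    apply Finset.prod_ne_zero_iff.mpr
    intro l hl
    simp only [Finset.mem_filter] at hl
    simp only [eval_sub, eval_X, eval_C, sub_ne_zero]
    exact fun h => hl.2 (hθ h.symm)
  have hgm : ∀ m l, (g m).eval (θ l) = if l = m then -1 else 1 := by
    intro m l
    rw [hg]
    by_cases h : l = m
    · subst h
      simp only [eval_sub, eval_one, eval_mul, eval_C, if_pos rfl, if_true, eq_self_iff_true]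
      rw [div_mul_cancel₀ _ (hPjθ l)]
      norm_num
    · have hz : (Pj m).eval (θ l) = 0 := by
        rw [hPj, eval_prod]
        apply Finset.prod_eq_zero (Finset.mem_filter.mpr ⟨Finset.mem_univ l, h⟩)
        simp
      simp [hz, h]
  have hFeval : ∀ m, F.eval (θ m) = 0 := by
    intro m
    rw [hF]
    simp only [eval_mul, eval_C, eval_prod]
    have : ∏ l, ((X - C (θ l)).eval (θ m)) = 0 :=
      Finset.prod_eq_zero (Finset.mem_univ m) (by simp)
    simp only [eval_sub, eval_X, eval_C] at this ⊢
    rw [this, mul_zero]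
  have key : ∀ m, α * P.eval (θ m)
      = (g i).eval (θ m) * (g j).eval (θ m) * P.eval (θ m) := by
    intro m
    obtain ⟨Q, hQ⟩ := hdvd
    have h := congrArg (Polynomial.eval (θ m)) hQ
    simp only [eval_sub, eval_mul, eval_C, hFeval m, zero_mul] at h
    linear_combination h
  have tworoots : ∀ m₁ m₂, m₁ ≠ m₂ → P.eval (θ m₁) = 0 → P.eval (θ m₂) = 0 → False := by
    intro m₁ m₂ hne h1 h2
    have hθne : θ m₁ ≠ θ m₂ := fun h => hne (hθ h)
    have hsub : ({θ m₁, θ m₂} : Finset K) ⊆ P.roots.toFinset := by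
      intro x hx
      simp only [Finset.mem_insert, Finset.mem_singleton] at hx
      rcases hx with rfl | rfl <;>
        simp [Multiset.mem_toFinset, mem_roots, hP0, IsRoot, h1, h2]
    have hcard : ({θ m₁, θ m₂} : Finset K).card = 2 := Finset.card_pair hθne
    have h2' := Finset.card_le_card hsub
    have h3 : P.roots.toFinset.card ≤ Multiset.card P.roots := P.roots.toFinset_card_le
    have h4 : Multiset.card P.roots ≤ P.natDegree := P.card_roots'
    have h5 : P.natDegree ≤ 1 := natDegree_le_iff_degree_le.mpr hPdeg
    omega
  by_cases hα1 : α = 1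
  · subst hα1
    have hi := key i
    have hj := key j
    rw [hgm i i, hgm j i] at hi
    rw [hgm i j, hgm j j] at hj
    simp only [if_neg hij, if_neg (Ne.symm hij), if_pos rfl] at hi hj
    norm_num at hi hj
    have hpi : P.eval (θ i) = 0 := by
      have : (2 : K) * P.eval (θ i) = 0 := by linear_combination hi
      exact (mul_eq_zero.mp this).resolve_left hchar
    have hpj : P.eval (θ j) = 0 := by
      have : (2 : K) * P.eval (θ j) = 0 := by linear_combination hj
      exact (mul_eq_zero.mp this).resolve_left hchar
    exact tworoots i j hij hpi hpj
  · have hS : 1 < ((Finset.univ : Finset (Fin 6)) \ {i, j}).card := by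
      rw [Finset.card_sdiff_of_subset (Finset.subset_univ _), Finset.card_pair hij]
      simp
    obtain ⟨a, ha, b, hb, hab⟩ := Finset.one_lt_card.mp hS
    simp only [Finset.mem_sdiff, Finset.mem_univ, Finset.mem_insert,
      Finset.mem_singleton, true_and, not_or] at ha hb
    have hz : ∀ m, m ≠ i → m ≠ j → P.eval (θ m) = 0 := by
      intro m hmi hmj
      have h := key m
      rw [hgm i m, hgm j m, if_neg hmi, if_neg hmj] at h
      have h' : (α - 1) * P.eval (θ m) = 0 := by linear_combination h
      exact (mul_eq_zero.mp h').resolve_left (sub_ne_zero.mpr hα1)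
    exact tworoots a b hab (hz a ha.1 ha.2) (hz b hb.1 hb.2)
end

section
/- If a nonzero polynomial P(X) of degree ≤ 5 satisfies α·P(X) ≡ g_i(X)g_j(X)·P(X) (mod F(X)) for some scalar α and i ≠ j, then P(θ_m) = 0 for at least two indices m among 1,…,6; in particular deg P ≥ 2. -/
open Polynomial

/-- if a nonzero `P` of degree ≤ 5 satisfies `α P ≡ g_i g_j P (mod F)` with
`i ≠ j`, then `P` vanishes at at least two of the `θ_m`; in particular `deg P ≥ 2`. -/
theorem stmt10 {K : Type*} [Field K] [IsAlgClosed K] (hchar : (2 : K) ≠ 0)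
    (θ : Fin 6 → K) (hθ : Function.Injective θ)
    (f6 : K) (hf6 : f6 ≠ 0) (F : K[X]) (hF : F = C f6 * ∏ m, (X - C (θ m)))
    (Pj : Fin 6 → K[X])
    (hPj : ∀ j, Pj j = ∏ m ∈ Finset.univ.filter (· ≠ j), (X - C (θ m)))
    (g : Fin 6 → K[X])
    (hg : ∀ m, g m = 1 - C (2 / (Pj m).eval (θ m)) * Pj m)
    (i j : Fin 6) (hij : i ≠ j) (α : K) (P : K[X]) (hP : P ≠ 0)
    (hPdeg : P.degree ≤ 5) (hcong : F ∣ C α * P - g i * g j * P) :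
    (∃ m n : Fin 6, m ≠ n ∧ P.eval (θ m) = 0 ∧ P.eval (θ n) = 0) ∧
      2 ≤ P.natDegree := by
  classical
  have hPdeg' : P.natDegree ≤ 5 := natDegree_le_iff_degree_le.2 hPdeg
  have hPne : ∀ m, (Pj m).eval (θ m) ≠ 0 := by
    intro m
    rw [hPj, eval_prod]
    refine Finset.prod_ne_zero_iff.2 ?_
    intro n hn
    simp only [Finset.mem_filter] at hn
    simp only [eval_sub, eval_X, eval_C, sub_ne_zero]
    exact fun h => hn.2 (hθ h.symm)
  have hgeval : ∀ m n : Fin 6, (g m).eval (θ n) = if n = m then -1 else 1 := by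
    intro m n
    rw [hg]
    simp only [eval_sub, eval_one, eval_mul, eval_C]
    by_cases h : n = m
    · subst h
      rw [div_mul_cancel₀ _ (hPne n)]
      norm_num
    · have h0 : (Pj m).eval (θ n) = 0 := by
        rw [hPj, eval_prod]
        apply Finset.prod_eq_zero (i := n)
        · simp [h]
        · simp
      rw [h0]
      simp [h]
  have hkey : ∀ m, (α - (g i).eval (θ m) * (g j).eval (θ m)) * P.eval (θ m) = 0 := by
    intro m
    obtain ⟨Q, hQ⟩ := hcong
    have hF0 : F.eval (θ m) = 0 := by
      rw [hF]
      simp only [eval_mul, eval_prod, eval_sub, eval_X, eval_C]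
      have : (∏ n : Fin 6, (θ m - θ n)) = 0 :=
        Finset.prod_eq_zero (Finset.mem_univ m) (by simp)
      rw [this, mul_zero]
    have := congrArg (eval (θ m)) hQ
    simp only [eval_sub, eval_mul, eval_C, hF0, zero_mul] at this
    linear_combination this
  have hroots_card : P.roots.toFinset.card ≤ P.natDegree :=
    le_trans (Multiset.toFinset_card_le _) (Polynomial.card_roots' P)
  have hexists : ∃ m, P.eval (θ m) ≠ 0 := by
    by_contra h
    push_neg at h
    have hsub : (Finset.univ.image θ) ⊆ P.roots.toFinset := by
      intro x hx
      simp only [Finset.mem_image, Finset.mem_univ, true_and] at hx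
      obtain ⟨m, rfl⟩ := hx
      simp [Multiset.mem_toFinset, mem_roots, hP, IsRoot, h m]
    have h6 : 6 ≤ P.roots.toFinset.card := by
      have := Finset.card_le_card hsub
      rwa [Finset.card_image_of_injective _ hθ, Finset.card_univ, Fintype.card_fin] at this
    omega
  obtain ⟨m0, hm0⟩ := hexists
  have hα : α = (g i).eval (θ m0) * (g j).eval (θ m0) := by
    rcases mul_eq_zero.1 (hkey m0) with h | h
    · exact sub_eq_zero.1 h
    · exact absurd h hm0
  have hdeg2 : ∀ m n : Fin 6, m ≠ n → P.eval (θ m) = 0 → P.eval (θ n) = 0 →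
      2 ≤ P.natDegree := by
    intro m n hmn hm hn
    have hsub : ({θ m, θ n} : Finset K) ⊆ P.roots.toFinset := by
      intro x hx
      simp only [Finset.mem_insert, Finset.mem_singleton] at hx
      rcases hx with rfl | rfl <;>
        simp [Multiset.mem_toFinset, mem_roots, hP, IsRoot, hm, hn]
    have h2 : ({θ m, θ n} : Finset K).card = 2 := Finset.card_pair (hθ.ne hmn)
    have := Finset.card_le_card hsub
    omega
  have hmain : ∃ m n : Fin 6, m ≠ n ∧ P.eval (θ m) = 0 ∧ P.eval (θ n) = 0 := by
    by_cases hcase : m0 = i ∨ m0 = j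
    · -- α = -1 ; P vanishes away from i and j
      have hαv : α = -1 := by
        rcases hcase with rfl | rfl
        · rw [hα, hgeval, hgeval, if_pos rfl, if_neg hij]; ring
        · rw [hα, hgeval, hgeval, if_neg (Ne.symm hij), if_pos rfl]; ring
      have hvan : ∀ m : Fin 6, m ≠ i → m ≠ j → P.eval (θ m) = 0 := by
        intro m hmi hmj
        have := hkey m
        rw [hgeval, hgeval, if_neg hmi, if_neg hmj, hαv] at this
        have h2 : (-1 - 1 * 1 : K) ≠ 0 := by
          intro h; apply hchar; linear_combination -h
        rcases mul_eq_zero.1 this with h | h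
        · exact absurd h h2
        · exact h
      -- pick two elements of univ \ {i, j}
      have hcard : 2 ≤ ((Finset.univ : Finset (Fin 6)) \ {i, j}).card := by
        have h2 : ({i, j} : Finset (Fin 6)).card = 2 := Finset.card_pair hij
        have := Finset.card_sdiff_of_subset (Finset.subset_univ ({i, j} : Finset (Fin 6)))
        rw [Finset.card_univ, Fintype.card_fin, h2] at this
        omega
      obtain ⟨m, hm, n, hn, hmn⟩ := Finset.one_lt_card.1 (lt_of_lt_of_le one_lt_two hcard)
      simp only [Finset.mem_sdiff, Finset.mem_insert, Finset.mem_singleton,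
        Finset.mem_univ, true_and, not_or] at hm hn
      exact ⟨m, n, hmn, hvan m hm.1 hm.2, hvan n hn.1 hn.2⟩
    · -- α = 1 ; P vanishes at i and j
      push_neg at hcase
      have hαv : α = 1 := by
        rw [hα, hgeval, hgeval, if_neg hcase.1, if_neg hcase.2]; ring
      have hvi : P.eval (θ i) = 0 := by
        have := hkey i
        rw [hgeval, hgeval, if_pos rfl, if_neg hij, hαv] at this
        have h2 : (1 - -1 * 1 : K) ≠ 0 := by
          intro h; apply hchar; linear_combination h
        rcases mul_eq_zero.1 this with h | h
        · exact absurd h h2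
        · exact h
      have hvj : P.eval (θ j) = 0 := by
        have := hkey j
        rw [hgeval, hgeval, if_neg (Ne.symm hij), if_pos rfl, hαv] at this
        have h2 : (1 - 1 * -1 : K) ≠ 0 := by
          intro h; apply hchar; linear_combination h
        rcases mul_eq_zero.1 this with h | h
        · exact absurd h h2
        · exact h
      exact ⟨i, j, hij, hvi, hvj⟩
  obtain ⟨m, n, hmn, hm, hn⟩ := hmain
  exact ⟨⟨m, n, hmn, hm, hn⟩, hdeg2 m n hmn hm hn⟩
end

section
/- Given points (x,y) and (u,v) on the curve Y² = F(X) with yv ≠ 0 and x ≠ u, let M(X) be the unique cubic such that M(X)² − F(X) = (X−x)²(X−u)²H(X) for a quadratic H(X). If P(X) is the unique polynomial of degree ≤ 5 with (X−x)(X−u)P(X) ≡ M(X) (mod F(X)), then P(X)² ≡ H(X) (mod F(X)). -/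
open Polynomial

/-- with `M² − F = (X−x)²(X−u)² H`, `H` quadratic, and
`(X−x)(X−u) P ≡ M (mod F)` with `deg P ≤ 5`, one has `P² ≡ H (mod F)`. -/
theorem stmt11 {K : Type*} [Field K] (hchar : (2 : K) ≠ 0)
    (F : K[X]) (hFdeg : F.natDegree = 6) (hFsq : Squarefree F)
    (x u y v : K) (hxu : x ≠ u) (hy : y ^ 2 = F.eval x) (hv : v ^ 2 = F.eval u)
    (hyv : y * v ≠ 0)
    (M H : K[X]) (hMdeg : M.degree ≤ 3) (hHdeg : H.degree ≤ 2)
    (hM : M ^ 2 - F = (X - C x) ^ 2 * (X - C u) ^ 2 * H)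
    (P : K[X]) (hPdeg : P.degree ≤ 5)
    (hP : F ∣ (X - C x) * (X - C u) * P - M) :
    F ∣ P ^ 2 - H := by
  have hy0 : y ≠ 0 := fun h => hyv (by simp [h])
  have hv0 : v ≠ 0 := fun h => hyv (by simp [h])
  have hFx : F.eval x ≠ 0 := hy ▸ pow_ne_zero 2 hy0
  have hFu : F.eval u ≠ 0 := hv ▸ pow_ne_zero 2 hv0
  have cx : IsCoprime (X - C x) F :=
    (Polynomial.irreducible_X_sub_C x).coprime_iff_not_dvd.mpr
      (fun h => hFx (Polynomial.dvd_iff_isRoot.mp h))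
  have cu : IsCoprime (X - C u) F :=
    (Polynomial.irreducible_X_sub_C u).coprime_iff_not_dvd.mpr
      (fun h => hFu (Polynomial.dvd_iff_isRoot.mp h))
  have cA : IsCoprime ((X - C x) ^ 2 * (X - C u) ^ 2) F :=
    (cx.pow_left).mul_left (cu.pow_left)
  have h1 : F ∣ ((X - C x) * (X - C u) * P - M) * ((X - C x) * (X - C u) * P + M) :=
    hP.mul_right _
  have h2 : (X - C x) ^ 2 * (X - C u) ^ 2 * (P ^ 2 - H) =
      ((X - C x) * (X - C u) * P - M) * ((X - C x) * (X - C u) * P + M) + F := by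
    linear_combination hM
  have h3 : F ∣ (X - C x) ^ 2 * (X - C u) ^ 2 * (P ^ 2 - H) := by
    rw [h2]; exact dvd_add h1 dvd_rfl
  exact cA.symm.dvd_of_dvd_mul_left h3
end

section
/- Suppose a, b, c, d ∈ k̄ with ad − bc ≠ 0 and σ ∈ S₆ satisfy θ_j = (c·θ_{σ(j)} + d)/(a·θ_{σ(j)} + b) for all j (with all denominators nonzero). Then ω_j / ω_{σ(j)} = γ / (a·θ_{σ(j)} + b)⁴, where γ = (bc − ad)⁵ / ∏_i (a·θ_{σ(i)} + b) is independent of j. -/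
/-!
A Möbius substitution `x = (c y + d)/(a y + b)` turns each difference into
`x - x' = (b c - a d)(y - y') / ((a y + b)(a y' + b))`. Multiplying this over the five
`i ≠ j` and reindexing the product on the right by `σ` gives
`ω_j · ∏_{i ≠ j} (a θ_{σ i} + b) · (a θ_{σ j} + b)⁵ = (b c - a d)⁵ ω_{σ j}`,
which is the claim after absorbing one factor `a θ_{σ j} + b` into the full product.
-/

open Finset Function

section

variable {K : Type*} [Field K]

theorem mobius_sub_mul {a b c d x x' y y' : K} (hy : a * y + b ≠ 0) (hy' : a * y' + b ≠ 0)
    (hx : x = (c * y + d) / (a * y + b)) (hx' : x' = (c * y' + d) / (a * y' + b)) :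
    (x - x') * ((a * y + b) * (a * y' + b)) = (b * c - a * d) * (y - y') := by
  rw [hx, hx', div_sub_div _ _ hy hy', div_mul_cancel₀ _ (mul_ne_zero hy hy')]
  ring

variable {ι ι' : Type*} [Fintype ι] [DecidableEq ι] [Fintype ι'] [DecidableEq ι']

def diffProd (θ : ι → K) (j : ι) : K :=
  ∏ i ∈ univ.erase j, (θ i - θ j)

theorem diffProd_ne_zero {θ : ι → K} (hθ : Injective θ) (j : ι) : diffProd θ j ≠ 0 :=
  prod_ne_zero_iff.2 fun _ hi => sub_ne_zero.2 fun h => (mem_erase.1 hi).1 (hθ h)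

theorem diffProd_comp_equiv (θ : ι → K) (e : ι' ≃ ι) (j : ι') :
    diffProd (θ ∘ e) j = diffProd θ (e j) := by
  rw [diffProd, diffProd, ← map_univ_equiv e, ← Equiv.coe_toEmbedding, ← map_erase, prod_map]
  rfl

theorem diffProd_mul_of_mobius {θ φ : ι → K} {a b c d : K} (hden : ∀ i, a * φ i + b ≠ 0)
    (hrel : ∀ i, θ i = (c * φ i + d) / (a * φ i + b)) (j : ι) :
    diffProd θ j * (∏ i ∈ univ.erase j, (a * φ i + b)) * (a * φ j + b) ^ (Fintype.card ι - 1)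
      = (b * c - a * d) ^ (Fintype.card ι - 1) * diffProd φ j := by
  have hcard : #(univ.erase j) = Fintype.card ι - 1 := card_erase_of_mem (mem_univ j)
  calc diffProd θ j * (∏ i ∈ univ.erase j, (a * φ i + b)) * (a * φ j + b) ^ (Fintype.card ι - 1)
      = ∏ i ∈ univ.erase j, (θ i - θ j) * ((a * φ i + b) * (a * φ j + b)) := by
        rw [diffProd, prod_mul_distrib, prod_mul_distrib, prod_const, hcard, mul_assoc]
    _ = ∏ i ∈ univ.erase j, (b * c - a * d) * (φ i - φ j) :=
        prod_congr rfl fun i _ => mobius_sub_mul (hden i) (hden j) (hrel i) (hrel j)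
    _ = (b * c - a * d) ^ (Fintype.card ι - 1) * diffProd φ j := by
        rw [prod_mul_distrib, prod_const, hcard, diffProd]

end

theorem stmt16_general {K : Type*} [Field K]
    (θ : Fin 6 → K) (hθ : Function.Injective θ)
    (σ : Equiv.Perm (Fin 6)) (a b c d : K)
    (hden : ∀ j, a * θ (σ j) + b ≠ 0)
    (hrel : ∀ j, θ j = (c * θ (σ j) + d) / (a * θ (σ j) + b))
    (ω : Fin 6 → K)
    (hω : ∀ j, ω j = ∏ i ∈ Finset.univ.filter (· ≠ j), (θ i - θ j)) :
    ∀ j, ω j / ω (σ j) =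
      ((b * c - a * d) ^ 5 / ∏ i, (a * θ (σ i) + b)) / (a * θ (σ j) + b) ^ 4 := by
  have hω' : ω = diffProd θ := funext fun j => by rw [hω, filter_ne', diffProd]
  intro j
  have key := diffProd_mul_of_mobius (φ := θ ∘ σ) hden hrel j
  rw [diffProd_comp_equiv] at key
  have hprod : ∏ i, (a * θ (σ i) + b) ≠ 0 := prod_ne_zero_iff.2 fun i _ => hden i
  rw [hω', div_div, div_eq_div_iff (diffProd_ne_zero hθ _)
    (mul_ne_zero hprod (pow_ne_zero _ (hden j))), ← mul_prod_erase univ _ (mem_univ j)]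
  simp only [Fintype.card_fin, Nat.reduceSub, comp_apply] at key
  linear_combination key

/-- if `θ_j = (c θ_{σ(j)} + d)/(a θ_{σ(j)} + b)` for all `j`, then
`ω_j / ω_{σ(j)} = γ / (a θ_{σ(j)} + b)⁴` with
`γ = (bc − ad)⁵ / ∏_i (a θ_{σ(i)} + b)` independent of `j`. -/
theorem stmt16 {K : Type*} [Field K] [IsAlgClosed K] (hchar : (2 : K) ≠ 0)
    (θ : Fin 6 → K) (hθ : Function.Injective θ)
    (σ : Equiv.Perm (Fin 6)) (a b c d : K) (had : a * d - b * c ≠ 0)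
    (hden : ∀ j, a * θ (σ j) + b ≠ 0)
    (hrel : ∀ j, θ j = (c * θ (σ j) + d) / (a * θ (σ j) + b))
    (ω : Fin 6 → K)
    (hω : ∀ j, ω j = ∏ i ∈ Finset.univ.filter (· ≠ j), (θ i - θ j)) :
    ∀ j, ω j / ω (σ j) =
      ((b * c - a * d) ^ 5 / ∏ i, (a * θ (σ i) + b)) / (a * θ (σ j) + b) ^ 4 :=
  stmt16_general θ hθ σ a b c d hden hrel ω hω
end

section
/- Let M(X) = (m_x(X−x)+1)((X−u)/(x−u))²·y + (m_u(X−u)+1)((X−x)/(u−x))²·v with m_x = F'(x)/(2F(x)) − 2/(x−u) and m_u = F'(u)/(2F(u)) − 2/(u−x). Then the polynomial F(X) − M(X)² and its derivative both vanish at X = x and at X = u; i.e. (X−x)²(X−u)² divides F(X) − M(X)². -/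
/-!
`M` is the two-point Hermite interpolant of `√F`: it takes the values `y`, `v` at `x`, `u`
with slopes `F'(x)/(2y)`, `F'(u)/(2v)`. Hence `M²` agrees with `F` to first order at `x` and
at `u`, so `F - M²` has double roots there, and the coprime factors `(X - x)²`, `(X - u)²`
both divide it.
-/

open Polynomial

theorem Polynomial.X_sub_C_sq_dvd_of_isRoot_derivative {R : Type*} [CommRing R] {p : R[X]}
    {a : R} (h0 : p.IsRoot a) (h1 : p.derivative.IsRoot a) : (X - C a) ^ 2 ∣ p := by
  rcases eq_or_ne p 0 with rfl | hp
  · exact dvd_zero _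
  · exact (le_rootMultiplicity_iff hp).1 ((one_lt_rootMultiplicity_iff_isRoot hp).2 ⟨h0, h1⟩)

section HermiteBasis

variable {K : Type*} [Field K] (a b m : K)

/-- The cubic with value `1` at `a`, value `0` and slope `0` at `b`, and slope
`m + 2 / (a - b)` at `a`. -/
noncomputable def hermiteBasis : K[X] :=
  (C m * (X - C a) + 1) * (C ((a - b)⁻¹) * (X - C b)) ^ 2

variable {a b}

theorem eval_hermiteBasis_self (hab : a ≠ b) : (hermiteBasis a b m).eval a = 1 := by
  simp [hermiteBasis, sub_ne_zero.2 hab]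

theorem eval_hermiteBasis_right : (hermiteBasis a b m).eval b = 0 := by
  simp [hermiteBasis]

theorem eval_derivative_hermiteBasis_self (hab : a ≠ b) :
    (derivative (hermiteBasis a b m)).eval a = m + 2 / (a - b) := by
  have := sub_ne_zero.2 hab
  simp [hermiteBasis, derivative_mul, derivative_pow]
  field_simp

theorem eval_derivative_hermiteBasis_right :
    (derivative (hermiteBasis a b m)).eval b = 0 := by
  simp [hermiteBasis, derivative_mul, derivative_pow]

end HermiteBasis

theorem eval_sub_sq_eq_zero_and_derivative {K : Type*} [Field K] (h2 : (2 : K) ≠ 0)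
    {F M : K[X]} {a y : K} (hFa : F.eval a ≠ 0) (hy : y ^ 2 = F.eval a) (hM : M.eval a = y)
    (hM' : M.derivative.eval a = F.derivative.eval a / (2 * F.eval a) * y) :
    (F - M ^ 2).eval a = 0 ∧ (F - M ^ 2).derivative.eval a = 0 := by
  refine ⟨by simp [hM, hy], ?_⟩
  simp only [derivative_sub, derivative_pow, Nat.cast_ofNat, Nat.add_one_sub_one, pow_one,
    eval_sub, eval_mul, eval_C, hM, hM']
  field_simp
  rw [hy]
  ring

theorem stmt18_general {K : Type*} [Field K] (hchar : (2 : K) ≠ 0)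
    (F : K[X])
    (x u y v : K) (hxu : x ≠ u) (hFx : F.eval x ≠ 0) (hFu : F.eval u ≠ 0)
    (hy : y ^ 2 = F.eval x) (hv : v ^ 2 = F.eval u)
    (mx mu : K)
    (hmx : mx = (F.derivative.eval x) / (2 * F.eval x) - 2 / (x - u))
    (hmu : mu = (F.derivative.eval u) / (2 * F.eval u) - 2 / (u - x))
    (M : K[X])
    (hM : M = (C mx * (X - C x) + 1) * (C ((x - u)⁻¹) * (X - C u)) ^ 2 * C y +
              (C mu * (X - C u) + 1) * (C ((u - x)⁻¹) * (X - C x)) ^ 2 * C v) :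
    ((F - M ^ 2).eval x = 0 ∧ (F - M ^ 2).eval u = 0 ∧
        ((F - M ^ 2).derivative.eval x = 0 ∧ (F - M ^ 2).derivative.eval u = 0)) ∧
      (X - C x) ^ 2 * (X - C u) ^ 2 ∣ F - M ^ 2 := by
  replace hM : M = hermiteBasis x u mx * C y + hermiteBasis u x mu * C v := hM
  obtain ⟨hx0, hx1⟩ := eval_sub_sq_eq_zero_and_derivative (M := M) hchar hFx hy
    (by simp [hM, eval_hermiteBasis_self _ hxu, eval_hermiteBasis_right])
    (by simp [hM, eval_derivative_hermiteBasis_self _ hxu, eval_derivative_hermiteBasis_right,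
      hmx])
  obtain ⟨hu0, hu1⟩ := eval_sub_sq_eq_zero_and_derivative (M := M) hchar hFu hv
    (by simp [hM, eval_hermiteBasis_self _ hxu.symm, eval_hermiteBasis_right])
    (by simp [hM, eval_derivative_hermiteBasis_self _ hxu.symm,
      eval_derivative_hermiteBasis_right, hmu])
  refine ⟨⟨hx0, hu0, hx1, hu1⟩, ?_⟩
  have hcop : IsCoprime ((X - C x) ^ 2) ((X - C u) ^ 2) :=
    (isCoprime_X_sub_C_of_isUnit_sub (sub_ne_zero.2 hxu).isUnit).pow
  exact hcop.mul_dvd (X_sub_C_sq_dvd_of_isRoot_derivative hx0 hx1)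
    (X_sub_C_sq_dvd_of_isRoot_derivative hu0 hu1)

/-- with `m_x = F'(x)/(2F(x)) − 2/(x−u)`, `m_u = F'(u)/(2F(u)) − 2/(u−x)`
and the stated cubic `M`, the polynomial `F − M²` and its derivative vanish at `x` and
`u`; i.e. `(X−x)²(X−u)²` divides `F − M²`. -/
theorem stmt18 {K : Type*} [Field K] (hchar : (2 : K) ≠ 0)
    (F : K[X]) (hFdeg : F.natDegree = 6)
    (x u y v : K) (hxu : x ≠ u) (hFx : F.eval x ≠ 0) (hFu : F.eval u ≠ 0)
    (hy : y ^ 2 = F.eval x) (hv : v ^ 2 = F.eval u)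
    (mx mu : K)
    (hmx : mx = (F.derivative.eval x) / (2 * F.eval x) - 2 / (x - u))
    (hmu : mu = (F.derivative.eval u) / (2 * F.eval u) - 2 / (u - x))
    (M : K[X])
    (hM : M = (C mx * (X - C x) + 1) * (C ((x - u)⁻¹) * (X - C u)) ^ 2 * C y +
              (C mu * (X - C u) + 1) * (C ((u - x)⁻¹) * (X - C x)) ^ 2 * C v) :
    ((F - M ^ 2).eval x = 0 ∧ (F - M ^ 2).eval u = 0 ∧
        ((F - M ^ 2).derivative.eval x = 0 ∧ (F - M ^ 2).derivative.eval u = 0)) ∧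
      (X - C x) ^ 2 * (X - C u) ^ 2 ∣ F - M ^ 2 :=
  stmt18_general hchar F x u y v hxu hFx hFu hy hv mx mu hmx hmu M hM
end

section
/- Let ξ(X) be a polynomial with ξ(θ_j) = ξ_j and let P(X) = Σ_j π_j P_j(X) be of degree ≤ 5. Then ξ(X)·P(X)² ≡ Σ_j ξ_j ω_j π_j² P_j(X) (mod F(X)). -/
open Polynomial

/-- for `P = Σ_j π_j P_j` of degree ≤ 5 and any `ξ(X)`,
`ξ P² ≡ Σ_j ξ(θ_j) ω_j π_j² P_j (mod F)`. -/
theorem stmt19 {K : Type*} [Field K] (hchar : (2 : K) ≠ 0)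
    (θ : Fin 6 → K) (hθ : Function.Injective θ)
    (f6 : K) (hf6 : f6 ≠ 0) (F : K[X]) (hF : F = C f6 * ∏ i, (X - C (θ i)))
    (Pj : Fin 6 → K[X])
    (hPj : ∀ j, Pj j = ∏ i ∈ Finset.univ.filter (· ≠ j), (X - C (θ i)))
    (ω : Fin 6 → K) (hω : ∀ j, ω j = (Pj j).eval (θ j))
    (ξ : K[X]) (π : Fin 6 → K) (P : K[X]) (hP : P = ∑ j, C (π j) * Pj j) :
    F ∣ ξ * P ^ 2 - ∑ j, C (ξ.eval (θ j) * ω j * π j ^ 2) * Pj j := by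
  set g : K[X] := ξ * P ^ 2 - ∑ j, C (ξ.eval (θ j) * ω j * π j ^ 2) * Pj j with hg
  have hPj0 : ∀ i j : Fin 6, i ≠ j → (Pj j).eval (θ i) = 0 := by
    intro i j hij
    rw [hPj, eval_prod]
    refine Finset.prod_eq_zero (Finset.mem_filter.mpr ⟨Finset.mem_univ i, hij⟩) ?_
    simp
  have hroot : ∀ i, g.eval (θ i) = 0 := by
    intro i
    have hPe : P.eval (θ i) = π i * ω i := by
      rw [hP, eval_finset_sum, Finset.sum_eq_single i]
      · simp [hω]
      · intro j _ hj
        simp [hPj0 i j (Ne.symm hj)]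
      · simp
    have hSe : (∑ j, C (ξ.eval (θ j) * ω j * π j ^ 2) * Pj j).eval (θ i)
        = ξ.eval (θ i) * ω i * π i ^ 2 * ω i := by
      rw [eval_finset_sum, Finset.sum_eq_single i]
      · simp [hω]
      · intro j _ hj
        simp [hPj0 i j (Ne.symm hj)]
      · simp
    simp only [hg, eval_sub, eval_mul, eval_pow, hPe, hSe]
    ring
  have hdvd : (∏ i, (X - C (θ i))) ∣ g := by
    refine Finset.prod_dvd_of_coprime ?_ ?_
    · intro i _ j _ hij
      exact Polynomial.pairwise_coprime_X_sub_C hθ hij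
    · intro i _
      exact dvd_iff_isRoot.mpr (hroot i)
  rw [hF]
  exact ((isUnit_C.mpr hf6.isUnit).mul_left_dvd).mpr hdvd
end
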